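/- Let γ be a balanced directed multigraph (every vertex has indegree equal to outdegree), let e be a directed edge with initial vertex v. Then the number of Eulerian tours of γ starting with the edge e equals σ(γ, v) · ∏_{u} (outdeg(u) − 1)!, where σ(γ, v) is the number of oriented spanning trees of γ rooted at v (all tree edges directed toward v) and the product runs over all vertices u. -/

import Mathlib

/-!
Record, for an Eulerian tour starting with `e₀` and for every vertex `u`, the order in which the
tour leaves `u`. These orderings start with `e₀` at the root `src e₀`, and their last edges form
an arborescence rooted at `src e₀`: after its last exit from `u` the tour never comes back to `u`,
so the last exits along a tree path are traversed in increasing order and the path must end at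
the root.

Conversely, given such orderings, follow the greedy walk from `e₀` that always leaves the current
vertex by the next unused edge of its ordering. By balance it can only get stuck at the root, and
it has then used every edge: if `u` has an unused out-edge, its last exit is unused, so its target
has an unused in-edge, hence (by balance) an unused out-edge, and so on up to the root. The two
constructions are mutually inverse. For a fixed arborescence the orderings are free apart from
their first edge at the root and their last edge elsewhere, which leaves `∏ u, (outdeg u - 1)!`
choices.
-/

section BEST

variable {V E : Type} [Fintype V] [DecidableEq V] [Fintype E] [DecidableEq E]

/-- `l` is an Eulerian tour of the directed multigraph with edge set `E`
(edge `e` running from `src e` to `tgt e`) starting with the edge `e₀`: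
it lists every edge exactly once, begins with `e₀`, consecutive edges are
head-to-tail, and the tour closes up. -/
def IsEulerianTourFrom (src tgt : E → V) (e₀ : E) (l : List E) : Prop :=
  l.Nodup ∧ (∀ f : E, f ∈ l) ∧ l.head? = some e₀ ∧
  (∀ i, (h : i + 1 < l.length) →
    tgt (l.get ⟨i, Nat.lt_of_succ_lt h⟩) = src (l.get ⟨i + 1, h⟩)) ∧
  (∀ h : l ≠ [], tgt (l.getLast h) = src e₀)

/-- `t` is an oriented spanning tree (arborescence) rooted at `v`: it selects
for each vertex `u ≠ v` an edge leaving `u`, and following the selected edges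
from any vertex eventually reaches the root `v`. -/
def IsArborescence (src tgt : E → V) (v : V) (t : ∀ u : V, u ≠ v → E) : Prop :=
  (∀ u h, src (t u h) = u) ∧
  (∀ u : V, ∃ n : ℕ,
    (fun w => if h : w = v then v else tgt (t w h))^[n] u = v)

end BEST

section Orderings

open Finset
open scoped Nat

variable {α : Type*} [DecidableEq α]

theorem card_nodup_list_mem_iff (s : Finset α) :
    Nat.card {l : List α // l.Nodup ∧ ∀ a, a ∈ l ↔ a ∈ s} = (#s)! := by
  have e : {l : List α // l.Nodup ∧ ∀ a, a ∈ l ↔ a ∈ s} ≃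
      s.toList.permutations.toFinset :=
    Equiv.subtypeEquivRight fun l => by
      rw [List.mem_toFinset, List.mem_permutations]
      refine ⟨fun ⟨hl, hmem⟩ =>
        (List.perm_ext_iff_of_nodup hl s.nodup_toList).2 (by simpa using hmem),
        fun h => ⟨h.nodup_iff.2 s.nodup_toList, fun a => by simpa using h.mem_iff⟩⟩
  rw [Nat.card_congr e, Nat.card_eq_fintype_card, Fintype.card_coe,
    List.toFinset_card_of_nodup (List.nodup_permutations _ s.nodup_toList),
    List.length_permutations, length_toList]

theorem card_nodup_list_mem_iff_head?_eq {s : Finset α} {x : α} (hx : x ∈ s) :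
    Nat.card {l : List α // l.Nodup ∧ (∀ a, a ∈ l ↔ a ∈ s) ∧ l.head? = some x} =
      (#s - 1)! := by
  have e : {m : List α // m.Nodup ∧ ∀ a, a ∈ m ↔ a ∈ s.erase x} ≃
      {l : List α // l.Nodup ∧ (∀ a, a ∈ l ↔ a ∈ s) ∧ l.head? = some x} :=
    { toFun := fun m => ⟨x :: m.1, by
        obtain ⟨hm, hmem⟩ := m.2
        refine ⟨List.nodup_cons.2 ⟨fun h => by simpa using (hmem x).1 h, hm⟩,
          fun a => ?_, rfl⟩
        by_cases ha : a = x <;> simp [ha, hmem, hx]⟩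
      invFun := fun l => ⟨l.1.tail, by
        obtain ⟨l, hl, hmem, hhead⟩ := l
        obtain ⟨m, rfl⟩ := List.head?_eq_some_iff.1 hhead
        obtain ⟨hxm, hm⟩ := List.nodup_cons.1 hl
        refine ⟨hm, fun a => ?_⟩
        by_cases ha : a = x
        · subst ha; simpa using hxm
        · simpa [ha] using hmem a⟩
      left_inv := fun m => rfl
      right_inv := fun ⟨l, _, _, hhead⟩ => by
        obtain ⟨m, rfl⟩ := List.head?_eq_some_iff.1 hhead
        rfl }
  rw [← Nat.card_congr e, card_nodup_list_mem_iff, card_erase_of_mem hx]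

theorem card_nodup_list_mem_iff_getLast?_eq {s : Finset α} {x : α} (hx : x ∈ s) :
    Nat.card {l : List α // l.Nodup ∧ (∀ a, a ∈ l ↔ a ∈ s) ∧ l.getLast? = some x} =
      (#s - 1)! := by
  rw [← card_nodup_list_mem_iff_head?_eq hx]
  exact Nat.card_congr <| (Function.Involutive.toPerm _ List.reverse_involutive).subtypeEquiv
    fun l => by simp [Function.Involutive.toPerm, List.head?_reverse]

end Orderings

section Lists

open Finset

variable {α : Type*}

theorem List.IsPrefix.append_singleton_of_getElem? {p l : List α} {a : α} (h : p <+: l)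
    (ha : l[p.length]? = some a) : p ++ [a] <+: l := by
  have := List.take_prefix (p.length + 1) l
  rwa [List.take_add_one, ← List.prefix_iff_eq_take.1 h, ha] at this

theorem List.IsPrefix.eq_of_getLast_mem {p l : List α} (h : p <+: l) (hl : l.Nodup)
    (hne : l ≠ []) (hlast : l.getLast hne ∈ p) : p = l := by
  obtain ⟨r, rfl⟩ := h
  rcases List.eq_nil_or_concat r with rfl | ⟨r, a, rfl⟩
  · exact (List.append_nil p).symm
  · simp only [List.concat_eq_append, ← List.append_assoc, List.getLast_append_singleton]
      at hl hlast
    exact absurd rfl ((List.nodup_append.1 hl).2.2 a (List.mem_append_left r hlast) a (by simp))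

theorem List.IsSuffix.getLast?_filter_getD_mem {s l : List α} (h : s <:+ l) {p : α → Bool}
    {b : α} (hb : b ∈ s) (hp : p b) (d : α) : (l.filter p).getLast?.getD d ∈ s.filter p := by
  obtain ⟨t, rfl⟩ := h
  have hne : s.filter p ≠ [] := List.ne_nil_of_mem (List.mem_filter.2 ⟨hb, hp⟩)
  rw [List.filter_append, List.getLast?_append, List.getLast?_eq_some_getLast hne,
    Option.some_or, Option.getD_some]
  exact List.getLast_mem hne

theorem List.Nodup.countP_eq_card_filter_toFinset [DecidableEq α] {l : List α} (hl : l.Nodup)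
    (p : α → Prop) [DecidablePred p] : l.countP (p ·) = #{a ∈ l.toFinset | p a} := by
  rw [List.countP_eq_length_filter, ← List.toFinset_card_of_nodup (hl.filter _),
    List.toFinset_filter]
  simp

theorem List.Nodup.countP_le_card [Fintype α] {l : List α} (hl : l.Nodup) (p : α → Prop)
    [DecidablePred p] : l.countP (p ·) ≤ #{a | p a} := by
  classical
  rw [hl.countP_eq_card_filter_toFinset]
  exact card_le_card (filter_subset_filter _ (subset_univ _))

theorem List.Nodup.mem_of_countP_eq_card [Fintype α] {l : List α} (hl : l.Nodup)
    {p : α → Prop} [DecidablePred p] (h : l.countP (p ·) = #{a | p a}) {a : α} (ha : p a) :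
    a ∈ l := by
  classical
  rw [hl.countP_eq_card_filter_toFinset] at h
  have := eq_of_subset_of_card_le (filter_subset_filter p (subset_univ l.toFinset)) h.ge
  have ha' : a ∈ ({a | p a} : Finset α) := by simpa using ha
  rw [← this] at ha'
  exact List.mem_toFinset.1 (mem_filter.1 ha').1

end Lists

section Walks

variable {V E : Type*} {src tgt : E → V}

variable (src tgt) in
abbrev IsWalk (l : List E) : Prop := l.IsChain fun a b => tgt a = src b

theorem IsWalk.src_head_cons_map_tgt {l : List E} (hl : IsWalk src tgt l) (hne : l ≠ []) :
    src (l.head hne) :: l.map tgt = l.map src ++ [tgt (l.getLast hne)] := by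
  induction l with
  | nil => contradiction
  | cons a l ih =>
    rcases l with _ | ⟨b, l⟩
    · rfl
    · obtain ⟨hab, hl⟩ := List.isChain_cons_cons.1 hl
      simp only [List.head_cons, List.map_cons, List.getLast_cons_cons, hab] at ih ⊢
      rw [ih hl (List.cons_ne_nil _ _)]
      rfl

variable [DecidableEq V]

theorem IsWalk.countP_tgt_add_ite {l : List E} (hl : IsWalk src tgt l) (hne : l ≠ []) (w : V) :
    l.countP (tgt · = w) + (if src (l.head hne) = w then 1 else 0) =
      l.countP (src · = w) + (if tgt (l.getLast hne) = w then 1 else 0) := by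
  have := congrArg (List.countP (· = w)) (hl.src_head_cons_map_tgt hne)
  simp only [List.countP_cons, List.countP_append, List.countP_map, Function.comp_def] at this
  simpa [add_comm] using this

end Walks

section Tours

variable {V E : Type} {src tgt : E → V}

theorem isEulerianTourFrom_iff {e₀ : E} {l : List E} :
    IsEulerianTourFrom src tgt e₀ l ↔ l.Nodup ∧ (∀ f, f ∈ l) ∧ l.head? = some e₀ ∧
      IsWalk src tgt l ∧ ∀ h : l ≠ [], tgt (l.getLast h) = src e₀ := by
  simp only [IsEulerianTourFrom, List.isChain_iff_getElem, List.get_eq_getElem]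

variable [DecidableEq V]

theorem IsArborescence.induction {v : V} {t : ∀ u : V, u ≠ v → E}
    (ht : IsArborescence src tgt v t) {P : V → Prop} (hroot : P v)
    (hstep : ∀ u (hu : u ≠ v), P (tgt (t u hu)) → P u) (u : V) : P u := by
  obtain ⟨n, hn⟩ := ht.2 u
  induction n generalizing u with
  | zero => exact (Function.iterate_zero_apply _ u ▸ hn) ▸ hroot
  | succ n ih =>
    rw [Function.iterate_succ_apply] at hn
    by_cases hu : u = v
    · exact hu ▸ hroot
    · rw [dif_neg hu] at hn
      exact hstep u hu (ih _ hn)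

end Tours

section ExitOrderings

open Finset

variable {V E : Type} {src tgt : E → V} {D : V → List E} {e₀ : E} {l : List E}

variable (src) in
def IsOutOrdering (D : V → List E) : Prop :=
  ∀ u, (D u).Nodup ∧ ∀ e, e ∈ D u ↔ src e = u

variable (src) in
/-- The default `e₀` is junk: it is only taken when `D u = []`. -/
def lastExits (D : V → List E) (e₀ : E) : ∀ u : V, u ≠ src e₀ → E :=
  fun u _ => (D u).getLast?.getD e₀

theorem lastExits_eq_iff {D : V → List E} {t : ∀ u : V, u ≠ src e₀ → E}
    (ht : ∀ u h, src (t u h) = u) :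
    lastExits src D e₀ = t ↔ ∀ u (h : u ≠ src e₀), (D u).getLast? = some (t u h) := by
  refine ⟨fun hD u h => ?_,
    fun hD => funext fun u => funext fun h => by simp [lastExits, hD u h]⟩
  subst hD
  have hne : D u ≠ [] := by
    intro hnil
    have := ht u h
    simp only [lastExits, hnil, List.getLast?_nil, Option.getD_none] at this
    exact h this.symm
  simp [lastExits, List.getLast?_eq_some_getLast hne]

variable [DecidableEq V]

variable (src tgt) in
def IsExitOrdering (e₀ : E) (D : V → List E) : Prop :=
  IsOutOrdering src D ∧ (D (src e₀)).head? = some e₀ ∧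
    IsArborescence src tgt (src e₀) (lastExits src D e₀)

theorem IsOutOrdering.length_eq [Fintype E] (hD : IsOutOrdering src D) (u : V) :
    (D u).length = #{e | src e = u} := by
  classical
  rw [← List.toFinset_card_of_nodup (hD u).1]
  congr 1
  ext e
  simp [(hD u).2]

theorem nodup_of_filter_prefix (hD : ∀ u, (D u).Nodup)
    (h : ∀ u, l.filter (src · = u) <+: D u) : l.Nodup := by
  classical
  refine List.nodup_iff_count_le_one.2 fun a => ?_
  calc l.count a = (l.filter (src · = src a)).count a := (List.count_filter (by simp)).symm
    _ ≤ (D (src a)).count a := (h (src a)).sublist.count_le a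
    _ ≤ 1 := List.nodup_iff_count_le_one.1 (hD _) a

end ExitOrderings

section GreedyWalk

open Finset

variable {V E : Type} [DecidableEq V] {src tgt : E → V} {D : V → List E} {e₀ : E} {l : List E}

variable (src tgt) in
/-- If `l` has used an initial segment of each `D u`, this is the first unused edge of the
ordering at the end vertex of `l`. -/
def nextEdge (D : V → List E) (l : List E) : Option E :=
  l.getLast?.bind fun e => (D (tgt e))[(l.filter (src · = tgt e)).length]?

variable (src tgt) in
def greedyWalk (D : V → List E) (e₀ : E) (n : ℕ) : List E :=
  (fun l => l ++ (nextEdge src tgt D l).toList)^[n] [e₀]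

theorem greedyWalk_succ (n : ℕ) :
    greedyWalk src tgt D e₀ (n + 1) =
      greedyWalk src tgt D e₀ n ++ (nextEdge src tgt D (greedyWalk src tgt D e₀ n)).toList :=
  Function.iterate_succ_apply' _ _ _

variable (src tgt) in
structure IsGreedyTrail (D : V → List E) (e₀ : E) (l : List E) : Prop where
  head?_eq : l.head? = some e₀
  isWalk : IsWalk src tgt l
  filter_prefix : ∀ u, l.filter (src · = u) <+: D u

namespace IsGreedyTrail

theorem ne_nil (h : IsGreedyTrail src tgt D e₀ l) : l ≠ [] := by
  rintro rfl
  simpa using h.head?_eq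

theorem head_eq (h : IsGreedyTrail src tgt D e₀ l) : l.head h.ne_nil = e₀ :=
  Option.some_injective _ ((List.head?_eq_some_head h.ne_nil).symm.trans h.head?_eq)

theorem nodup (h : IsGreedyTrail src tgt D e₀ l) (hD : IsOutOrdering src D) : l.Nodup :=
  nodup_of_filter_prefix (fun u => (hD u).1) h.filter_prefix

theorem extend (h : IsGreedyTrail src tgt D e₀ l) (hD : IsOutOrdering src D) :
    IsGreedyTrail src tgt D e₀ (l ++ (nextEdge src tgt D l).toList) := by
  cases hf : nextEdge src tgt D l with
  | none => simpa using h
  | some f =>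
    set e := l.getLast h.ne_nil
    have hget : (D (tgt e))[(l.filter (src · = tgt e)).length]? = some f := by
      simpa [nextEdge, List.getLast?_eq_some_getLast h.ne_nil] using hf
    have hsrc : src f = tgt e := ((hD _).2 f).1 (List.mem_of_getElem? hget)
    rw [Option.toList_some]
    refine ⟨by simp [List.head?_append, h.head?_eq], ?_, fun u => ?_⟩
    · refine List.isChain_append.2 ⟨h.isWalk, List.isChain_singleton f, ?_⟩
      intro x hx y hy
      rw [List.getLast?_eq_some_getLast h.ne_nil, Option.mem_some_iff] at hx
      rw [List.head?_singleton, Option.mem_some_iff] at hy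
      subst hx hy
      exact hsrc.symm
    · rw [List.filter_append]
      by_cases hu : src f = u
      · subst hu
        rw [List.filter_singleton, decide_eq_true rfl, cond_true, hsrc]
        exact (h.filter_prefix _).append_singleton_of_getElem? hget
      · simpa [hu] using h.filter_prefix u

theorem filter_eq_of_nextEdge_eq_none (h : IsGreedyTrail src tgt D e₀ l)
    (hnone : nextEdge src tgt D l = none) :
    l.filter (src · = tgt (l.getLast h.ne_nil)) = D (tgt (l.getLast h.ne_nil)) := by
  have hpre := h.filter_prefix (tgt (l.getLast h.ne_nil))
  refine hpre.eq_of_length (le_antisymm hpre.length_le ?_)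
  simpa [nextEdge, List.getLast?_eq_some_getLast h.ne_nil] using hnone

end IsGreedyTrail

theorem isGreedyTrail_greedyWalk (hD : IsOutOrdering src D)
    (hhead : (D (src e₀)).head? = some e₀) (n : ℕ) :
    IsGreedyTrail src tgt D e₀ (greedyWalk src tgt D e₀ n) := by
  induction n with
  | zero =>
    refine ⟨rfl, List.isChain_singleton e₀, fun u => ?_⟩
    by_cases hu : src e₀ = u
    · subst hu
      obtain ⟨m, hm⟩ := List.head?_eq_some_iff.1 hhead
      simp [greedyWalk, hm]
    · simp [greedyWalk, hu]
  | succ n ih => rw [greedyWalk_succ]; exact ih.extend hD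

theorem nextEdge_greedyWalk_card [Fintype E] (hD : IsOutOrdering src D)
    (hhead : (D (src e₀)).head? = some e₀) :
    nextEdge src tgt D (greedyWalk src tgt D e₀ (Fintype.card E)) = none := by
  have hgrow : ∀ n, nextEdge src tgt D (greedyWalk src tgt D e₀ n) = none ∨
      (greedyWalk src tgt D e₀ n).length = n + 1 := by
    intro n
    induction n with
    | zero => exact Or.inr rfl
    | succ n ih =>
      rw [greedyWalk_succ]
      cases hn : nextEdge src tgt D (greedyWalk src tgt D e₀ n) with
      | none => simp [hn]
      | some f => exact Or.inr (by simpa [hn] using ih)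
  refine (hgrow _).resolve_right fun hlen => ?_
  have h := isGreedyTrail_greedyWalk (tgt := tgt) hD hhead (Fintype.card E)
  have := (h.nodup hD).length_le_card
  omega

variable [Fintype E]

theorem IsGreedyTrail.tgt_getLast_eq_of_nextEdge_eq_none
    (hbal : ∀ v, #{e | tgt e = v} = #{e | src e = v}) (hD : IsOutOrdering src D)
    (h : IsGreedyTrail src tgt D e₀ l) (hnone : nextEdge src tgt D l = none) :
    tgt (l.getLast h.ne_nil) = src e₀ := by
  set w := tgt (l.getLast h.ne_nil)
  by_contra hw
  have hwalk := h.isWalk.countP_tgt_add_ite h.ne_nil w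
  have hout : l.countP (src · = w) = #{e | src e = w} := by
    rw [List.countP_eq_length_filter, h.filter_eq_of_nextEdge_eq_none hnone, hD.length_eq]
  have hin := (h.nodup hD).countP_le_card (tgt · = w)
  rw [h.head_eq, if_neg (Ne.symm hw), if_pos rfl, hout] at hwalk
  rw [hbal] at hin
  omega

theorem IsGreedyTrail.countP_tgt_eq_countP_src_of_nextEdge_eq_none
    (hbal : ∀ v, #{e | tgt e = v} = #{e | src e = v}) (hD : IsOutOrdering src D)
    (h : IsGreedyTrail src tgt D e₀ l) (hnone : nextEdge src tgt D l = none) (w : V) :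
    l.countP (tgt · = w) = l.countP (src · = w) := by
  have := h.isWalk.countP_tgt_add_ite h.ne_nil w
  rwa [h.head_eq, h.tgt_getLast_eq_of_nextEdge_eq_none hbal hD hnone, Nat.add_right_cancel_iff]
    at this

theorem IsGreedyTrail.filter_eq_of_nextEdge_eq_none_of_isArborescence
    (hbal : ∀ v, #{e | tgt e = v} = #{e | src e = v}) (hD : IsOutOrdering src D)
    (harb : IsArborescence src tgt (src e₀) (lastExits src D e₀))
    (h : IsGreedyTrail src tgt D e₀ l) (hnone : nextEdge src tgt D l = none) (u : V) :
    l.filter (src · = u) = D u := by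
  refine harb.induction (P := fun u => l.filter (src · = u) = D u) ?_ (fun u hu hparent => ?_) u
  · simpa [h.tgt_getLast_eq_of_nextEdge_eq_none hbal hD hnone] using
      h.filter_eq_of_nextEdge_eq_none hnone
  set t := lastExits src D e₀ u hu
  have hDu : D u ≠ [] := by
    intro hnil
    have := harb.1 u hu
    simp [lastExits, hnil] at this
    exact hu this.symm
  have ht : t = (D u).getLast hDu := by simp [t, lastExits, List.getLast?_eq_some_getLast hDu]
  -- by balance, the walk uses every edge into `tgt t`, in particular `t` itself
  have hin : t ∈ l := by
    refine (h.nodup hD).mem_of_countP_eq_card (p := (tgt · = tgt t)) ?_ rfl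
    rw [h.countP_tgt_eq_countP_src_of_nextEdge_eq_none hbal hD hnone,
      List.countP_eq_length_filter, hparent, hD.length_eq, hbal]
  refine (h.filter_prefix u).eq_of_getLast_mem (hD u).1 hDu ?_
  rw [← ht]
  exact List.mem_filter.2 ⟨hin, by simpa using harb.1 u hu⟩

theorem filter_greedyWalk (hbal : ∀ v, #{e | tgt e = v} = #{e | src e = v})
    (hD : IsExitOrdering src tgt e₀ D) (u : V) :
    (greedyWalk src tgt D e₀ (Fintype.card E)).filter (src · = u) = D u :=
  (isGreedyTrail_greedyWalk hD.1 hD.2.1 _).filter_eq_of_nextEdge_eq_none_of_isArborescence hbal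
    hD.1 hD.2.2 (nextEdge_greedyWalk_card hD.1 hD.2.1) u

theorem isEulerianTourFrom_greedyWalk (hbal : ∀ v, #{e | tgt e = v} = #{e | src e = v})
    (hD : IsExitOrdering src tgt e₀ D) :
    IsEulerianTourFrom src tgt e₀ (greedyWalk src tgt D e₀ (Fintype.card E)) := by
  have h := isGreedyTrail_greedyWalk (tgt := tgt) hD.1 hD.2.1 (Fintype.card E)
  have hclose := h.tgt_getLast_eq_of_nextEdge_eq_none hbal hD.1
    (nextEdge_greedyWalk_card hD.1 hD.2.1)
  refine isEulerianTourFrom_iff.2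
    ⟨h.nodup hD.1, fun f => ?_, h.head?_eq, h.isWalk, fun _ => hclose⟩
  have hf : f ∈ D (src f) := ((hD.1 (src f)).2 f).2 rfl
  rw [← filter_greedyWalk hbal hD] at hf
  exact List.mem_of_mem_filter hf

end GreedyWalk

section TourOrderings

open Finset

variable {V E : Type} [DecidableEq V] {src tgt : E → V} {e₀ : E} {l : List E}

theorem nextEdge_filter_append {p r : List E} (hl : IsWalk src tgt (p ++ r)) (hp : p ≠ []) :
    nextEdge src tgt (fun u => (p ++ r).filter (src · = u)) p = r.head? := by
  rw [nextEdge, List.getLast?_eq_some_getLast hp, Option.bind_some, List.filter_append,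
    List.getElem?_append_right le_rfl, Nat.sub_self, ← List.head?_eq_getElem?]
  rcases r with _ | ⟨b, r⟩
  · rfl
  · have : tgt (p.getLast hp) = src b :=
      (List.isChain_append.1 hl).2.2 _ (List.getLast_mem_getLast? hp) _ rfl
    simp [this]

theorem greedyWalk_filter_eq_take (hl : IsWalk src tgt l) (hhead : l.head? = some e₀) (n : ℕ) :
    greedyWalk src tgt (fun u => l.filter (src · = u)) e₀ n = l.take (n + 1) := by
  induction n with
  | zero =>
    obtain ⟨m, rfl⟩ := List.head?_eq_some_iff.1 hhead
    rfl
  | succ n ih =>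
    have hne : l.take (n + 1) ≠ [] := by
      obtain ⟨m, rfl⟩ := List.head?_eq_some_iff.1 hhead
      simp
    have hnext := nextEdge_filter_append (l.take_append_drop (n + 1) ▸ hl) hne
    rw [List.take_append_drop] at hnext
    rw [greedyWalk_succ, ih, hnext, List.head?_drop, ← List.take_add_one]

theorem IsEulerianTourFrom.isOutOrdering_filter (hl : IsEulerianTourFrom src tgt e₀ l) :
    IsOutOrdering src fun u => l.filter (src · = u) :=
  fun _ => ⟨hl.1.filter _, fun e => by simp [hl.2.1 e]⟩

theorem IsEulerianTourFrom.head?_filter (hl : IsEulerianTourFrom src tgt e₀ l) :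
    (l.filter (src · = src e₀)).head? = some e₀ := by
  obtain ⟨m, rfl⟩ := List.head?_eq_some_iff.1 hl.2.2.1
  simp

-- The last exit from `src b` lies in every suffix of the tour containing `b`, and the tour either
-- ends with it (at the root) or continues with an edge leaving its target: induct on the suffix.
theorem IsEulerianTourFrom.exists_iterate_lastExits_eq (hl : IsEulerianTourFrom src tgt e₀ l)
    {s : List E} (hs : s <:+ l) {b : E} (hb : b ∈ s) :
    ∃ n, (fun w => if h : w = src e₀ then src e₀
        else tgt (lastExits src (fun u => l.filter (src · = u)) e₀ w h))^[n] (src b) =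
      src e₀ := by
  obtain ⟨-, -, -, hwalk, hclose⟩ := isEulerianTourFrom_iff.1 hl
  set f := fun w => if h : w = src e₀ then src e₀
    else tgt (lastExits src (fun u => l.filter (src · = u)) e₀ w h)
  induction s generalizing b with
  | nil => simp at hb
  | cons a s ih =>
    by_cases hroot : src b = src e₀
    · exact ⟨0, hroot⟩
    have hmem := hs.getLast?_filter_getD_mem (p := (src · = src b)) hb (by simp) e₀
    rcases List.mem_cons.1 (List.mem_of_mem_filter hmem) with heq | hmem'
    · suffices ∃ n, f^[n] (tgt a) = src e₀ by
        obtain ⟨n, hn⟩ := this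
        have hfb : f (src b) = tgt a := by simp only [f, dif_neg hroot, lastExits, heq]
        exact ⟨n + 1, by rwa [Function.iterate_succ_apply, hfb]⟩
      rcases s with _ | ⟨c, s⟩
      · have hne : l ≠ [] := List.ne_nil_of_mem (hs.subset (List.mem_singleton_self a))
        have := hclose hne
        rw [← hs.getLast (List.cons_ne_nil a []), List.getLast_singleton] at this
        exact ⟨0, this⟩
      · rw [(List.isChain_cons_cons.1 (hwalk.suffix hs)).1]
        exact ih ((List.suffix_cons a _).trans hs) List.mem_cons_self
    · rw [← of_decide_eq_true (List.mem_filter.1 hmem).2]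
      exact ih ((List.suffix_cons a s).trans hs) hmem'

theorem IsEulerianTourFrom.isArborescence_lastExits (hsrc : ∀ u, ∃ e, src e = u)
    (hl : IsEulerianTourFrom src tgt e₀ l) :
    IsArborescence src tgt (src e₀) (lastExits src (fun u => l.filter (src · = u)) e₀) := by
  refine ⟨fun u _ => ?_, fun u => ?_⟩ <;> obtain ⟨b, rfl⟩ := hsrc u
  · have := (List.suffix_refl l).getLast?_filter_getD_mem (p := (src · = src b)) (hl.2.1 b)
      (by simp) e₀
    exact of_decide_eq_true (List.mem_filter.1 this).2
  · exact hl.exists_iterate_lastExits_eq (List.suffix_refl l) (hl.2.1 b)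

end TourOrderings

section Counting

open Finset
open scoped Nat

variable {V E : Type} [DecidableEq V] [Fintype E] {src tgt : E → V} {e₀ : E}

def tourEquivExitOrdering (hbal : ∀ v, #{e | tgt e = v} = #{e | src e = v})
    (hsrc : ∀ u, ∃ e, src e = u) :
    {l // IsEulerianTourFrom src tgt e₀ l} ≃ {D // IsExitOrdering src tgt e₀ D} where
  toFun l := ⟨fun u => l.1.filter (src · = u),
    l.2.isOutOrdering_filter, l.2.head?_filter, l.2.isArborescence_lastExits hsrc⟩
  invFun D := ⟨greedyWalk src tgt D.1 e₀ (Fintype.card E),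
    isEulerianTourFrom_greedyWalk hbal D.2⟩
  left_inv l := Subtype.ext <| by
    change greedyWalk src tgt (fun u => l.1.filter (src · = u)) e₀ (Fintype.card E) = l.1
    obtain ⟨hnodup, -, hhead, hwalk, -⟩ := isEulerianTourFrom_iff.1 l.2
    rw [greedyWalk_filter_eq_take hwalk hhead,
      List.take_of_length_le (hnodup.length_le_card.trans (Nat.le_succ _))]
  right_inv D := Subtype.ext <| funext (filter_greedyWalk hbal D.2)

theorem isExitOrdering_and_lastExits_eq_iff {t : ∀ u : V, u ≠ src e₀ → E}
    (ht : IsArborescence src tgt (src e₀) t) {D : V → List E} :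
    IsExitOrdering src tgt e₀ D ∧ lastExits src D e₀ = t ↔
      ∀ u, (D u).Nodup ∧ (∀ e, e ∈ D u ↔ e ∈ ({e | src e = u} : Finset E)) ∧
        if h : u = src e₀ then (D u).head? = some e₀ else (D u).getLast? = some (t u h) := by
  rw [lastExits_eq_iff ht.1]
  constructor
  · rintro ⟨⟨hD, hhead, -⟩, hlast⟩ u
    refine ⟨(hD u).1, by simpa using (hD u).2, ?_⟩
    split_ifs with h
    · exact h ▸ hhead
    · exact hlast u h
  · intro hP
    have hlast : ∀ u (h : u ≠ src e₀), (D u).getLast? = some (t u h) :=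
      fun u h => by simpa [h] using (hP u).2.2
    have hout : IsOutOrdering src D := fun u => ⟨(hP u).1, by simpa using (hP u).2.1⟩
    have hhead : (D (src e₀)).head? = some e₀ := by simpa using (hP (src e₀)).2.2
    exact ⟨⟨hout, hhead, ((lastExits_eq_iff ht.1).2 hlast).symm ▸ ht⟩, hlast⟩

theorem exists_src_eq_of_connected (hbal : ∀ v, #{e | tgt e = v} = #{e | src e = v})
    (hconn : ∀ u w : V, Relation.ReflTransGen
      (fun x y => ∃ e : E, (src e = x ∧ tgt e = y) ∨ (src e = y ∧ tgt e = x)) u w)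
    (e₀ : E) (u : V) : ∃ e, src e = u := by
  rcases (hconn u (src e₀)).cases_head with rfl | ⟨w, ⟨e, ⟨he, -⟩ | ⟨-, he⟩⟩, -⟩
  · exact ⟨e₀, rfl⟩
  · exact ⟨e, he⟩
  · have : 0 < #{e | src e = u} := by
      rw [← hbal]
      exact card_pos.2 ⟨e, by simp [he]⟩
    obtain ⟨f, hf⟩ := card_pos.1 this
    exact ⟨f, by simpa using hf⟩

variable [DecidableEq E]

theorem card_exitOrderings [Fintype V] :
    Nat.card {D // IsExitOrdering src tgt e₀ D} =
      Nat.card {t // IsArborescence src tgt (src e₀) t} * ∏ u, (#{e | src e = u} - 1)! := by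
  have : Finite {D // IsExitOrdering src tgt e₀ D} :=
    Finite.of_injective (fun D u => (⟨D.1 u, (D.2.1 u).1⟩ : {l : List E // l.Nodup}))
      fun D D' h => Subtype.ext (funext fun u => congrArg Subtype.val (congrFun h u))
  have : Fintype {t // IsArborescence src tgt (src e₀) t} := Fintype.ofFinite _
  let proj (D : {D // IsExitOrdering src tgt e₀ D}) :
      {t // IsArborescence src tgt (src e₀) t} := ⟨lastExits src D.1 e₀, D.2.2.2⟩
  have hfiber : ∀ t, Nat.card {D // proj D = t} = ∏ u, (#{e | src e = u} - 1)! := by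
    intro t
    let P (u : V) (m : List E) : Prop :=
      m.Nodup ∧ (∀ e, e ∈ m ↔ e ∈ ({e | src e = u} : Finset E)) ∧
        if h : u = src e₀ then m.head? = some e₀ else m.getLast? = some (t.1 u h)
    rw [Nat.card_congr ((Equiv.subtypeEquivRight fun D => Subtype.ext_iff).trans
      ((Equiv.subtypeSubtypeEquivSubtypeInter _ (fun D => lastExits src D e₀ = t.1)).trans
      ((Equiv.subtypeEquivRight fun D => isExitOrdering_and_lastExits_eq_iff t.2).trans
        (Equiv.subtypePiEquivPi (p := P))))), Nat.card_pi]
    refine prod_congr rfl fun u _ => ?_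
    by_cases hu : u = src e₀
    · simp only [P, dif_pos hu]
      exact card_nodup_list_mem_iff_head?_eq (by simp [hu])
    · simp only [P, dif_neg hu]
      exact card_nodup_list_mem_iff_getLast?_eq (by simpa using t.2.1 u hu)
  rw [← Nat.card_congr (Equiv.sigmaFiberEquiv proj), Nat.card_sigma]
  simp [hfiber, Nat.card_eq_fintype_card]

end Counting

section BEST

variable {V E : Type} [Fintype V] [DecidableEq V] [Fintype E] [DecidableEq E]

/-- The BEST theorem: in a connected balanced directed multigraph, the number
of Eulerian tours starting with a fixed edge `e₀` equals the number of
oriented spanning trees rooted at `src e₀` times `∏_u (outdeg u − 1)!`. -/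
theorem best_theorem (src tgt : E → V)
    (hbal : ∀ v : V, (Finset.univ.filter fun e => tgt e = v).card =
      (Finset.univ.filter fun e => src e = v).card)
    (hconn : ∀ u w : V, Relation.ReflTransGen
      (fun x y => ∃ e : E, (src e = x ∧ tgt e = y) ∨ (src e = y ∧ tgt e = x)) u w)
    (e₀ : E) :
    Nat.card {l : List E // IsEulerianTourFrom src tgt e₀ l} =
      Nat.card {t : ∀ u : V, u ≠ src e₀ → E //
          IsArborescence src tgt (src e₀) t} *
        ∏ u : V, ((Finset.univ.filter fun e => src e = u).card - 1).factorial := by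
  rw [Nat.card_congr (tourEquivExitOrdering hbal (exists_src_eq_of_connected hbal hconn e₀)),
    card_exitOrderings]

end BEST
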